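/- arXiv:1708.02751 — 2 statements merged into one kernel-verified Lean document; each statement's English description precedes it below -/
import Mathlib

section
/- For S > 0, α > 0 with α not an integer, and λ > 0, the Laplace transform of ψ(τ) = (S/(S+τ))^α is given by ψ̂(λ) = ∫₀^∞ e^{-λτ}(S/(S+τ))^α dτ = S^α λ^{α-1} e^{Sλ} Γ(1-α, Sλ), where Γ(b,z) = ∫_z^∞ t^{b-1} e^{-t} dt is the upper incomplete Gamma function. -/
/-! Since `e^{-λτ} (S/(S+τ))^α = S^α e^{λS} (S+τ)^{-α} e^{-λ(S+τ)}`, the substitution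
`t = λ(S+τ)` turns the Laplace transform into `S^α e^{λS} λ^{α-1} Γ(1-α, λS)`. -/

open MeasureTheory Set Real

/-- The upper incomplete Gamma function `Γ(b, z) = ∫_z^∞ t^{b-1} e^{-t} dt` (for `z > 0`). -/
noncomputable def upperGamma (b z : ℝ) : ℝ :=
  ∫ t in Set.Ioi z, t ^ (b - 1) * Real.exp (-t)

theorem integral_comp_add_left_Ioi {E : Type*} [NormedAddCommGroup E] [NormedSpace ℝ E]
    (g : ℝ → E) (a d : ℝ) :
    ∫ x in Ioi a, g (d + x) = ∫ x in Ioi (d + a), g x := by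
  have := (measurePreserving_add_left volume d).setIntegral_preimage_emb
    (measurableEmbedding_addLeft d) g (Ioi (d + a))
  rwa [preimage_const_add_Ioi, add_sub_cancel_left] at this

theorem integral_rpow_mul_exp_shift_eq_upperGamma (b : ℝ) {S lam : ℝ} (hS : 0 ≤ S)
    (hlam : 0 < lam) :
    ∫ τ in Ioi 0, (S + τ) ^ (b - 1) * exp (-(lam * (S + τ)))
      = lam ^ (-b) * upperGamma b (S * lam) := by
  have hsubst : upperGamma b (S * lam)
      = lam * ∫ τ in Ioi 0, (lam * (S + τ)) ^ (b - 1) * exp (-(lam * (S + τ))) := by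
    rw [upperGamma, mul_comm S lam, ← integral_comp_mul_left_Ioi' _ _ hlam, smul_eq_mul,
      ← add_zero S, ← integral_comp_add_left_Ioi, add_zero]
  have hpow : ∀ τ ∈ Ioi (0 : ℝ), (lam * (S + τ)) ^ (b - 1) * exp (-(lam * (S + τ)))
      = lam ^ (b - 1) * ((S + τ) ^ (b - 1) * exp (-(lam * (S + τ)))) := fun τ hτ => by
    rw [mul_rpow hlam.le (by linarith [mem_Ioi.mp hτ]), mul_assoc]
  have hconst : lam ^ (-b) * lam * lam ^ (b - 1) = 1 := by
    rw [← rpow_add_one hlam.ne', ← rpow_add hlam]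
    ring_nf
    exact rpow_zero lam
  rw [hsubst, setIntegral_congr_fun measurableSet_Ioi hpow, integral_const_mul, ← mul_assoc,
    ← mul_assoc, hconst, one_mul]

theorem laplace_transform_running_probability_general (S α lam : ℝ)
    (hS : 0 < S) (hlam : 0 < lam) :
    ∫ τ in Set.Ioi (0:ℝ), Real.exp (-lam * τ) * (S / (S + τ)) ^ α
      = S ^ α * lam ^ (α - 1) * Real.exp (S * lam) * upperGamma (1 - α) (S * lam) := by
  have hintegrand : ∀ τ ∈ Ioi (0 : ℝ), exp (-lam * τ) * (S / (S + τ)) ^ α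
      = S ^ α * exp (S * lam) * ((S + τ) ^ (1 - α - 1) * exp (-(lam * (S + τ)))) := by
    intro τ hτ
    have hSτ : 0 < S + τ := by linarith [mem_Ioi.mp hτ]
    rw [div_rpow hS.le hSτ.le, sub_sub_cancel_left, rpow_neg hSτ.le]
    have hexp : exp (-lam * τ) = exp (S * lam) * exp (-(lam * (S + τ))) := by
      rw [← exp_add]; ring_nf
    rw [hexp]; ring
  rw [setIntegral_congr_fun measurableSet_Ioi hintegrand, integral_const_mul,
    integral_rpow_mul_exp_shift_eq_upperGamma _ hS.le hlam, neg_sub]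
  ring

/-- Laplace transform of the running probability: for `S > 0`, non-integer `α > 0`
and `λ > 0`, `∫₀^∞ e^{-λτ}(S/(S+τ))^α dτ = S^α λ^{α-1} e^{Sλ} Γ(1-α, Sλ)`. -/
theorem laplace_transform_running_probability (S α lam : ℝ)
    (hS : 0 < S) (hα : 0 < α) (hαni : ∀ n : ℤ, α ≠ n) (hlam : 0 < lam) :
    ∫ τ in Set.Ioi (0:ℝ), Real.exp (-lam * τ) * (S / (S + τ)) ^ α
      = S ^ α * lam ^ (α - 1) * Real.exp (S * lam) * upperGamma (1 - α) (S * lam) :=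
  laplace_transform_running_probability_general S α lam hS hlam
end

section
/- For 1 < α < 2 and S > 0, as λ → 0⁺ the Laplace transform φ̂(λ) of φ(τ) = αS^α/(S+τ)^{α+1} satisfies φ̂(λ) = 1 + Sλ/(1-α) + O((Sλ)^α); i.e. |φ̂(λ) - 1 - Sλ/(1-α)| ≤ C λ^α for small λ and some constant C. -/
/-!
Since `φ` has mass `1` and mean `S/(α-1)`, the quantity to estimate is
`∫₀^∞ (e^{-λτ} - 1 + λτ) φ(τ) dτ`. The remainder satisfies `0 ≤ e^{-x} - 1 + x ≤ min(x, x²)` for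
`x ≥ 0`, and `φ(τ) ≤ αS^α τ^{-(α+1)}`. Splitting at `τ = 1/λ`, the quadratic bound gives
`αS^α λ² ∫₀^{1/λ} τ^{1-α} dτ = αS^α λ^α/(2-α)` (finite as `α < 2`) and the linear bound gives
`αS^α λ ∫_{1/λ}^∞ τ^{-α} dτ = αS^α λ^α/(α-1)` (finite as `α > 1`), for every `λ > 0`.
-/

open MeasureTheory Set Real

lemma integrableOn_Ioi_comp_const_add_iff {E : Type*} [NormedAddCommGroup E] {g : ℝ → E}
    (c a : ℝ) : IntegrableOn (fun x => g (c + x)) (Ioi a) ↔ IntegrableOn g (Ioi (c + a)) := by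
  have h := (measurePreserving_add_left volume c).integrableOn_comp_preimage
    (MeasurableEquiv.addLeft c).measurableEmbedding (f := g) (s := Ioi (c + a))
  rwa [preimage_const_add_Ioi, add_sub_cancel_left] at h

lemma integral_Ioi_comp_const_add {E : Type*} [NormedAddCommGroup E] [NormedSpace ℝ E]
    (g : ℝ → E) (c a : ℝ) : ∫ x in Ioi a, g (c + x) = ∫ x in Ioi (c + a), g x := by
  have h := (measurePreserving_add_left volume c).setIntegral_preimage_emb
    (MeasurableEquiv.addLeft c).measurableEmbedding g (Ioi (c + a))
  rwa [preimage_const_add_Ioi, add_sub_cancel_left] at h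

lemma integrableOn_Ioi_const_add_rpow {c s : ℝ} (hc : 0 < c) (hs : s < -1) :
    IntegrableOn (fun x : ℝ => (c + x) ^ s) (Ioi 0) :=
  (integrableOn_Ioi_comp_const_add_iff (g := fun x : ℝ => x ^ s) c 0).2 <| by
    simpa using integrableOn_Ioi_rpow_of_lt hs hc

lemma integral_Ioi_const_add_rpow {c s : ℝ} (hc : 0 < c) (hs : s < -1) :
    ∫ x in Ioi 0, (c + x) ^ s = -c ^ (s + 1) / (s + 1) := by
  simpa using (integral_Ioi_comp_const_add (fun x : ℝ => x ^ s) c 0).trans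
    (by simpa using integral_Ioi_rpow_of_lt hs hc)

lemma rpow_mul_inv_rpow_sub {x : ℝ} (hx : 0 < x) (a b : ℝ) : x ^ b * x⁻¹ ^ (b - a) = x ^ a := by
  rw [inv_rpow hx.le, ← rpow_neg hx.le, ← rpow_add hx]
  ring_nf

lemma abs_exp_neg_sub_one_add_le_sq {x : ℝ} (hx : |x| ≤ 1) : |exp (-x) - 1 + x| ≤ x ^ 2 := by
  simpa [sub_neg_eq_add] using abs_exp_sub_one_sub_id_le (x := -x) (by rwa [abs_neg])

lemma abs_exp_neg_sub_one_add_le {x : ℝ} (hx : 0 ≤ x) : |exp (-x) - 1 + x| ≤ x := by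
  have hlow : 0 ≤ exp (-x) - 1 + x := by linarith [add_one_le_exp (-x)]
  have hup : exp (-x) ≤ 1 := exp_le_one_iff.2 (neg_nonpos.2 hx)
  rw [abs_of_nonneg hlow]
  linarith

section ExpRemainder

variable {f : ℝ → ℝ} {K α lam : ℝ}

lemma abs_setIntegral_Ioc_exp_remainder_mul_le (hα : α < 2) (hlam : 0 < lam)
    (hf : ∀ τ ∈ Ioc 0 lam⁻¹, |f τ| ≤ K * τ ^ (-(α + 1))) :
    |∫ τ in Ioc 0 lam⁻¹, (exp (-lam * τ) - 1 + lam * τ) * f τ| ≤ K / (2 - α) * lam ^ α := by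
  have hmaj : IntegrableOn (fun τ => K * lam ^ 2 * τ ^ (1 - α)) (Ioc 0 lam⁻¹) :=
    ((intervalIntegral.intervalIntegrable_rpow' (by linarith)).1).const_mul _
  have hpt : ∀ τ ∈ Ioc 0 lam⁻¹,
      ‖(exp (-lam * τ) - 1 + lam * τ) * f τ‖ ≤ K * lam ^ 2 * τ ^ (1 - α) := by
    rintro τ ⟨hτ, hτT⟩
    have hlτ : |lam * τ| ≤ 1 := by
      rw [abs_of_pos (by positivity)]
      calc lam * τ ≤ lam * lam⁻¹ := by gcongr
        _ = 1 := mul_inv_cancel₀ hlam.ne'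
    calc ‖(exp (-lam * τ) - 1 + lam * τ) * f τ‖
        ≤ (lam * τ) ^ 2 * (K * τ ^ (-(α + 1))) := by
          rw [norm_mul, norm_eq_abs, neg_mul]
          exact mul_le_mul (abs_exp_neg_sub_one_add_le_sq hlτ) (hf τ ⟨hτ, hτT⟩)
            (abs_nonneg _) (sq_nonneg _)
      _ = K * lam ^ 2 * (τ ^ (-(α + 1)) * τ ^ ((2 : ℕ) : ℝ)) := by
          rw [rpow_natCast]; ring
      _ = K * lam ^ 2 * τ ^ (1 - α) := by
          rw [← rpow_add hτ]; ring_nf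
  have hval : ∫ τ in Ioc 0 lam⁻¹, τ ^ (1 - α) = lam⁻¹ ^ (2 - α) / (2 - α) := by
    rw [← intervalIntegral.integral_of_le (inv_pos.2 hlam).le,
      integral_rpow (Or.inl (by linarith)), zero_rpow (by linarith)]
    ring_nf
  calc _ ≤ ∫ τ in Ioc 0 lam⁻¹, K * lam ^ 2 * τ ^ (1 - α) :=
        norm_integral_le_of_norm_le hmaj ((ae_restrict_iff' measurableSet_Ioc).2 (.of_forall hpt))
    _ = K / (2 - α) * (lam ^ (2 : ℝ) * lam⁻¹ ^ (2 - α)) := by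
        rw [integral_const_mul, hval, rpow_two]; ring
    _ = K / (2 - α) * lam ^ α := by rw [rpow_mul_inv_rpow_sub hlam]

lemma abs_setIntegral_Ioi_exp_remainder_mul_le (hα : 1 < α) (hlam : 0 < lam)
    (hf : ∀ τ ∈ Ioi lam⁻¹, |f τ| ≤ K * τ ^ (-(α + 1))) :
    |∫ τ in Ioi lam⁻¹, (exp (-lam * τ) - 1 + lam * τ) * f τ| ≤ K / (α - 1) * lam ^ α := by
  have hT : 0 < lam⁻¹ := inv_pos.2 hlam
  have hmaj : IntegrableOn (fun τ => K * lam * τ ^ (-α)) (Ioi lam⁻¹) :=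
    (integrableOn_Ioi_rpow_of_lt (by linarith) hT).const_mul _
  have hpt : ∀ τ ∈ Ioi lam⁻¹,
      ‖(exp (-lam * τ) - 1 + lam * τ) * f τ‖ ≤ K * lam * τ ^ (-α) := by
    intro τ hτT
    have hτ : 0 < τ := hT.trans hτT
    calc ‖(exp (-lam * τ) - 1 + lam * τ) * f τ‖
        ≤ (lam * τ) * (K * τ ^ (-(α + 1))) := by
          rw [norm_mul, norm_eq_abs, neg_mul]
          exact mul_le_mul (abs_exp_neg_sub_one_add_le (by positivity)) (hf τ hτT)
            (abs_nonneg _) (by positivity)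
      _ = K * lam * (τ ^ (-(α + 1)) * τ) := by ring
      _ = K * lam * τ ^ (-α) := by rw [← rpow_add_one hτ.ne']; ring_nf
  have hval : ∫ τ in Ioi lam⁻¹, τ ^ (-α) = lam⁻¹ ^ (1 - α) / (α - 1) := by
    rw [integral_Ioi_rpow_of_lt (by linarith) hT, neg_add_eq_sub, ← neg_sub α 1,
      neg_div_neg_eq]
  calc _ ≤ ∫ τ in Ioi lam⁻¹, K * lam * τ ^ (-α) :=
        norm_integral_le_of_norm_le hmaj ((ae_restrict_iff' measurableSet_Ioi).2 (.of_forall hpt))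
    _ = K / (α - 1) * (lam ^ (1 : ℝ) * lam⁻¹ ^ (1 - α)) := by
        rw [integral_const_mul, hval, rpow_one]; ring
    _ = K / (α - 1) * lam ^ α := by rw [rpow_mul_inv_rpow_sub hlam]

theorem abs_laplace_sub_moment_expansion_le (hα1 : 1 < α) (hα2 : α < 2) (hlam : 0 < lam)
    (hf : IntegrableOn f (Ioi 0)) (hτf : IntegrableOn (fun τ => τ * f τ) (Ioi 0))
    (hbound : ∀ τ > 0, |f τ| ≤ K * τ ^ (-(α + 1))) :
    |(∫ τ in Ioi 0, exp (-lam * τ) * f τ) - (∫ τ in Ioi 0, f τ) + lam * ∫ τ in Ioi 0, τ * f τ|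
      ≤ K * (1 / (2 - α) + 1 / (α - 1)) * lam ^ α := by
  have hT : 0 < lam⁻¹ := inv_pos.2 hlam
  have hexp : IntegrableOn (fun τ => exp (-lam * τ) * f τ) (Ioi 0) := by
    refine hf.bdd_mul (c := 1) (by fun_prop)
      ((ae_restrict_iff' measurableSet_Ioi).2 (.of_forall fun τ hτ => ?_))
    rw [norm_eq_abs, abs_exp, exp_le_one_iff, neg_mul, neg_nonpos]
    exact mul_nonneg hlam.le (le_of_lt hτ)
  have hrem : IntegrableOn (fun τ => (exp (-lam * τ) - 1 + lam * τ) * f τ) (Ioi 0) :=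
    ((hexp.sub hf).add (hτf.const_mul lam)).congr_fun
      (fun τ _ => by simp only [Pi.add_apply, Pi.sub_apply]; ring) measurableSet_Ioi
  have hsplit : (∫ τ in Ioi 0, exp (-lam * τ) * f τ) - (∫ τ in Ioi 0, f τ)
      + lam * ∫ τ in Ioi 0, τ * f τ
      = (∫ τ in Ioc 0 lam⁻¹, (exp (-lam * τ) - 1 + lam * τ) * f τ)
        + ∫ τ in Ioi lam⁻¹, (exp (-lam * τ) - 1 + lam * τ) * f τ := by
    rw [← setIntegral_union Ioc_disjoint_Ioi_same measurableSet_Ioi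
      (hrem.mono_set Ioc_subset_Ioi_self) (hrem.mono_set (Ioi_subset_Ioi hT.le)),
      Ioc_union_Ioi_eq_Ioi hT.le, ← integral_sub hexp hf, ← integral_const_mul,
      ← integral_add (f := fun τ => exp (-lam * τ) * f τ - f τ) (hexp.sub hf)
        (hτf.const_mul lam)]
    congr 1 with τ
    ring
  rw [hsplit]
  calc _ ≤ _ := abs_add_le _ _
    _ ≤ K / (2 - α) * lam ^ α + K / (α - 1) * lam ^ α :=
        add_le_add (abs_setIntegral_Ioc_exp_remainder_mul_le hα2 hlam fun τ hτ => hbound τ hτ.1)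
          (abs_setIntegral_Ioi_exp_remainder_mul_le hα1 hlam fun τ hτ => hbound τ (hT.trans hτ))
    _ = K * (1 / (2 - α) + 1 / (α - 1)) * lam ^ α := by ring

end ExpRemainder

noncomputable def lomaxDensity (S α τ : ℝ) : ℝ := α * S ^ α / (S + τ) ^ (α + 1)

section Lomax

variable {S α : ℝ}

lemma lomaxDensity_eq_mul_rpow {τ : ℝ} (hτ : 0 ≤ S + τ) :
    lomaxDensity S α τ = α * S ^ α * (S + τ) ^ (-(α + 1)) := by
  rw [lomaxDensity, rpow_neg hτ, div_eq_mul_inv]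

lemma mul_lomaxDensity_eq {τ : ℝ} (hτ : 0 < S + τ) :
    τ * lomaxDensity S α τ = α * S ^ α * ((S + τ) ^ (-α) - S * (S + τ) ^ (-(α + 1))) := by
  rw [lomaxDensity_eq_mul_rpow hτ.le, show -α = -(α + 1) + 1 by ring, rpow_add_one hτ.ne']
  ring

lemma abs_lomaxDensity_le (hS : 0 ≤ S) (hα : 0 ≤ α) {τ : ℝ} (hτ : 0 < τ) :
    |lomaxDensity S α τ| ≤ α * S ^ α * τ ^ (-(α + 1)) := by
  have hSτ : 0 < S + τ := by linarith
  rw [lomaxDensity_eq_mul_rpow hSτ.le, abs_of_nonneg (by positivity)]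
  exact mul_le_mul_of_nonneg_left (rpow_le_rpow_of_nonpos hτ (by linarith) (by linarith))
    (by positivity)

lemma integrableOn_lomaxDensity (hS : 0 < S) (hα : 0 < α) :
    IntegrableOn (lomaxDensity S α) (Ioi 0) :=
  IntegrableOn.congr_fun
    ((integrableOn_Ioi_const_add_rpow (s := -(α + 1)) hS (by linarith)).const_mul _)
    (fun τ hτ => (lomaxDensity_eq_mul_rpow (by linarith [mem_Ioi.1 hτ])).symm) measurableSet_Ioi

lemma integral_lomaxDensity (hS : 0 < S) (hα : 0 < α) : ∫ τ in Ioi 0, lomaxDensity S α τ = 1 := by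
  rw [setIntegral_congr_fun measurableSet_Ioi
      fun τ hτ => lomaxDensity_eq_mul_rpow (by linarith [mem_Ioi.1 hτ]),
    integral_const_mul, integral_Ioi_const_add_rpow hS (by linarith),
    show -(α + 1) + 1 = -α by ring, rpow_neg hS.le]
  field_simp

lemma integrableOn_mul_lomaxDensity (hS : 0 < S) (hα : 1 < α) :
    IntegrableOn (fun τ => τ * lomaxDensity S α τ) (Ioi 0) :=
  IntegrableOn.congr_fun
    (((integrableOn_Ioi_const_add_rpow (s := -α) hS (by linarith)).sub
      ((integrableOn_Ioi_const_add_rpow (s := -(α + 1)) hS (by linarith)).const_mul S)).const_mul _)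
    (fun τ hτ => (mul_lomaxDensity_eq (by linarith [mem_Ioi.1 hτ])).symm) measurableSet_Ioi

lemma integral_mul_lomaxDensity (hS : 0 < S) (hα : 1 < α) :
    ∫ τ in Ioi 0, τ * lomaxDensity S α τ = S / (α - 1) := by
  rw [setIntegral_congr_fun measurableSet_Ioi
      fun τ hτ => mul_lomaxDensity_eq (by linarith [mem_Ioi.1 hτ]),
    integral_const_mul, integral_sub (integrableOn_Ioi_const_add_rpow hS (by linarith))
      ((integrableOn_Ioi_const_add_rpow hS (by linarith)).const_mul S),
    integral_const_mul, integral_Ioi_const_add_rpow hS (by linarith),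
    integral_Ioi_const_add_rpow hS (by linarith), show -(α + 1) + 1 = -α by ring,
    rpow_add_one hS.ne', rpow_neg hS.le]
  have : 1 - α ≠ 0 := by linarith
  have : α - 1 ≠ 0 := by linarith
  have : α ≠ 0 := by linarith
  rw [neg_add_eq_sub]
  field_simp
  ring

end Lomax

/-- Small-`λ` expansion of the Laplace transform `φ̂` of `φ(τ) = α S^α/(S+τ)^{α+1}`,
`1 < α < 2`: `φ̂(λ) = 1 + Sλ/(1-α) + O(λ^α)` as `λ → 0⁺`. -/
theorem laplace_phi_expansion (S α : ℝ) (hS : 0 < S) (hα1 : 1 < α) (hα2 : α < 2) :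
    ∃ C > (0:ℝ), ∃ δ > (0:ℝ), ∀ lam ∈ Set.Ioo (0:ℝ) δ,
      |(∫ τ in Set.Ioi (0:ℝ), Real.exp (-lam * τ) * (α * S ^ α / (S + τ) ^ (α + 1)))
          - 1 - S * lam / (1 - α)|
        ≤ C * lam ^ α := by
  have h2α : 0 < 2 - α := by linarith
  have hα1' : 0 < α - 1 := by linarith
  refine ⟨α * S ^ α * (1 / (2 - α) + 1 / (α - 1)), by positivity, 1, one_pos, fun lam hlam => ?_⟩
  have hexpansion := abs_laplace_sub_moment_expansion_le hα1 hα2 hlam.1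
    (integrableOn_lomaxDensity hS (by linarith)) (integrableOn_mul_lomaxDensity hS hα1)
    fun τ hτ => abs_lomaxDensity_le hS.le (by linarith) hτ
  rw [integral_lomaxDensity hS (by linarith), integral_mul_lomaxDensity hS hα1] at hexpansion
  have : 1 - α ≠ 0 := by linarith
  rwa [show S * lam / (1 - α) = -(lam * (S / (α - 1))) by field_simp; ring, sub_neg_eq_add]
end
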